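/- The pivoting property of graph states: for a graph G with edge uv, |G ∧ uv⟩ = H_u · H_v · ∏_{w ∈ N(u)∩N(v)} Z_w · |G⟩ up to a global phase, where G ∧ uv = G*u*v*u. -/

import Mathlib

open scoped Classical Matrix ComplexConjugate

noncomputable section

/-- The Hadamard matrix. -/
def Hm : Matrix (Fin 2) (Fin 2) ℂ := (Real.sqrt 2 : ℂ)⁻¹ • !![1, 1; 1, -1]

/-- Z rotation `diag(1, e^{iα})`. -/
def Zrot (α : ℝ) : Matrix (Fin 2) (Fin 2) ℂ := !![1, 0; 0, Complex.exp (α * Complex.I)]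

/-- X rotation `H ⬝ Z(α) ⬝ H`. -/
def Xrot (α : ℝ) : Matrix (Fin 2) (Fin 2) ℂ := Hm * Zrot α * Hm

/-- Pauli X. -/
def Xm : Matrix (Fin 2) (Fin 2) ℂ := !![0, 1; 1, 0]

/-- Pauli Z. -/
def Zm : Matrix (Fin 2) (Fin 2) ℂ := !![1, 0; 0, -1]

/-- A single-qubit operator `A` applied on qubit `v` of an `n`-qubit system
(identity on every other tensor factor). -/
def act1 {n : ℕ} (A : Matrix (Fin 2) (Fin 2) ℂ) (v : Fin n) :
    Matrix (Fin n → Fin 2) (Fin n → Fin 2) ℂ :=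
  fun x y => A (x v) (y v) * ∏ w : Fin n, if w = v then 1 else (if x w = y w then 1 else 0)

/-- Pauli `Z` applied on every qubit in `S` (a product of commuting diagonal gates). -/
def pauliZs {n : ℕ} (S : Finset (Fin n)) : Matrix (Fin n → Fin 2) (Fin n → Fin 2) ℂ :=
  Matrix.diagonal fun x => ∏ u ∈ S, if x u = 1 then (-1 : ℂ) else 1

/-- `Z(α)` applied on every qubit in `S`. -/
def zrotS {n : ℕ} (α : ℝ) (S : Finset (Fin n)) : Matrix (Fin n → Fin 2) (Fin n → Fin 2) ℂ :=
  Matrix.diagonal fun x => ∏ u ∈ S, if x u = 1 then Complex.exp (α * Complex.I) else 1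

/-- The controlled-Z gate on qubits `u`, `v`. -/
def CZ {n : ℕ} (u v : Fin n) : Matrix (Fin n → Fin 2) (Fin n → Fin 2) ℂ :=
  Matrix.diagonal fun x => if x u = 1 ∧ x v = 1 then (-1 : ℂ) else 1

/-- The graph state `|G⟩ = (∏_{uv ∈ E} CZ_{uv}) |+⟩^{⊗ n}`, written out in amplitudes
(the CZ gates are diagonal, so the product over edges is the product of the signs). -/
def graphState {n : ℕ} (G : SimpleGraph (Fin n)) : (Fin n → Fin 2) → ℂ :=
  fun x => ((Real.sqrt 2 : ℂ))⁻¹ ^ n *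
    ∏ a : Fin n, ∏ b : Fin n,
      if a < b ∧ G.Adj a b ∧ x a = 1 ∧ x b = 1 then (-1 : ℂ) else 1

/-- Local complementation of `G` at `v`: adjacency is toggled on pairs of distinct
neighbours of `v` and unchanged elsewhere. -/
def localComp {V : Type*} (G : SimpleGraph V) (v : V) : SimpleGraph V where
  Adj x y := x ≠ y ∧ (if G.Adj v x ∧ G.Adj v y then ¬ G.Adj x y else G.Adj x y)
  symm := by
    refine ⟨?_⟩
    rintro x y ⟨hxy, h⟩
    refine ⟨hxy.symm, ?_⟩
    by_cases hc : G.Adj v x ∧ G.Adj v y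
    · rw [if_pos ⟨hc.2, hc.1⟩]
      rw [if_pos hc] at h
      exact fun h' => h h'.symm
    · rw [if_neg fun h' => hc ⟨h'.2, h'.1⟩]
      rw [if_neg hc] at h
      exact h.symm
  loopless := by refine ⟨?_⟩; rintro x ⟨h, -⟩; exact h rfl


/-! ### Auxiliary machinery for the pivoting property -/

def bit2 : Fin 2 → ZMod 2 := fun i => (i.val : ZMod 2)

def sg : ZMod 2 → ℂ := fun k => if k = 1 then -1 else 1

lemma zmod2_cases (z : ZMod 2) : z = 0 ∨ z = 1 := by revert z; decide

lemma sg_add (a b : ZMod 2) : sg (a + b) = sg a * sg b := by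
  rcases zmod2_cases a with ha | ha <;> rcases zmod2_cases b with hb | hb <;>
    subst ha <;> subst hb <;> norm_num [sg] <;> decide

lemma sg_sum {ι : Type*} (s : Finset ι) (f : ι → ZMod 2) :
    sg (∑ i ∈ s, f i) = ∏ i ∈ s, sg (f i) := by
  classical
  induction s using Finset.cons_induction with
  | empty => simp [sg]
  | cons a s ha ih => rw [Finset.sum_cons, Finset.prod_cons, sg_add, ih]

lemma bit2_mul_self (i : Fin 2) : bit2 i * bit2 i = bit2 i := by fin_cases i <;> decide

lemma sg_bit2_mul (i j : Fin 2) :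
    sg (bit2 i * bit2 j) = if i = 1 ∧ j = 1 then (-1 : ℂ) else 1 := by
  fin_cases i <;> fin_cases j <;> norm_num [sg, bit2]

lemma sg_bit2 (i : Fin 2) : sg (bit2 i) = if i = 1 then (-1 : ℂ) else 1 := by
  fin_cases i <;> norm_num [sg, bit2]

lemma sum_pairs {n : ℕ} {β : Type*} [AddCommMonoid β] (h : Fin n → Fin n → β) :
    (∑ a : Fin n, ∑ b : Fin n, if a < b then h a b + h b a else 0) + (∑ a : Fin n, h a a)
      = ∑ a : Fin n, ∑ b : Fin n, h a b := by
  classical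
  have key : ∀ a b : Fin n, h a b =
      (if a < b then h a b else 0) + (if b < a then h a b else 0) +
        (if a = b then h a b else 0) := by
    intro a b
    rcases lt_trichotomy a b with h1 | h1 | h1
    · rw [if_pos h1, if_neg (asymm h1), if_neg h1.ne, add_zero, add_zero]
    · subst h1; simp
    · rw [if_neg (asymm h1), if_pos h1, if_neg h1.ne', zero_add, add_zero]
  calc (∑ a : Fin n, ∑ b : Fin n, if a < b then h a b + h b a else 0) + ∑ a : Fin n, h a a
      = ((∑ a : Fin n, ∑ b : Fin n, if a < b then h a b else 0) +
          (∑ a : Fin n, ∑ b : Fin n, if a < b then h b a else 0)) +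
          (∑ a : Fin n, ∑ b : Fin n, if a = b then h a b else 0) := by
        congr 1
        · rw [← Finset.sum_add_distrib]
          refine Finset.sum_congr rfl fun a _ => ?_
          rw [← Finset.sum_add_distrib]
          refine Finset.sum_congr rfl fun b _ => ?_
          by_cases hab : a < b <;> simp [hab]
        · refine Finset.sum_congr rfl fun a _ => ?_
          rw [Finset.sum_ite_eq Finset.univ a (h a)]
          simp
    _ = ∑ a : Fin n, ∑ b : Fin n, h a b := by
        rw [show (∑ a : Fin n, ∑ b : Fin n, if a < b then h b a else 0)
            = ∑ a : Fin n, ∑ b : Fin n, if b < a then h a b else 0 from Finset.sum_comm]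
        rw [← Finset.sum_add_distrib, ← Finset.sum_add_distrib]
        refine Finset.sum_congr rfl fun a _ => ?_
        rw [← Finset.sum_add_distrib, ← Finset.sum_add_distrib]
        refine Finset.sum_congr rfl fun b _ => ?_
        exact (key a b).symm

lemma cross_sum {n : ℕ} (p q : Fin n → ZMod 2) (x : Fin n → Fin 2) :
    (∑ a : Fin n, ∑ b : Fin n,
        if a < b then (p a * q b + p b * q a) * bit2 (x a) * bit2 (x b) else 0)
      = (∑ a : Fin n, p a * bit2 (x a)) * (∑ a : Fin n, q a * bit2 (x a)) +
          ∑ a : Fin n, p a * q a * bit2 (x a) := by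
  have h := sum_pairs (fun a b : Fin n => p a * q b * bit2 (x a) * bit2 (x b))
  have e1 : (∑ a : Fin n, ∑ b : Fin n,
      if a < b then (p a * q b * bit2 (x a) * bit2 (x b)) +
        (p b * q a * bit2 (x b) * bit2 (x a)) else 0)
      = ∑ a : Fin n, ∑ b : Fin n,
        if a < b then (p a * q b + p b * q a) * bit2 (x a) * bit2 (x b) else 0 := by
    refine Finset.sum_congr rfl fun a _ => Finset.sum_congr rfl fun b _ => ?_
    by_cases hab : a < b <;> simp only [hab, if_true, if_false]
    ring
  have e2 : (∑ a : Fin n, p a * q a * bit2 (x a) * bit2 (x a))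
      = ∑ a : Fin n, p a * q a * bit2 (x a) := by
    refine Finset.sum_congr rfl fun a _ => ?_
    rw [mul_assoc, bit2_mul_self]
  have e3 : (∑ a : Fin n, ∑ b : Fin n, p a * q b * bit2 (x a) * bit2 (x b))
      = (∑ a : Fin n, p a * bit2 (x a)) * (∑ a : Fin n, q a * bit2 (x a)) := by
    rw [Finset.sum_mul_sum]
    refine Finset.sum_congr rfl fun a _ => Finset.sum_congr rfl fun b _ => ?_
    ring
  rw [e1, e2, e3] at h
  have h2 : ∀ z : ZMod 2, z + z = 0 := by decide
  calc (∑ a : Fin n, ∑ b : Fin n,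
        if a < b then (p a * q b + p b * q a) * bit2 (x a) * bit2 (x b) else 0)
      = ((∑ a : Fin n, ∑ b : Fin n,
          if a < b then (p a * q b + p b * q a) * bit2 (x a) * bit2 (x b) else 0) +
          (∑ a : Fin n, p a * q a * bit2 (x a))) + (∑ a : Fin n, p a * q a * bit2 (x a)) := by
        rw [add_assoc, h2, add_zero]
    _ = _ := by rw [h]

def QF {n : ℕ} (M : Fin n → Fin n → ZMod 2) (x : Fin n → Fin 2) : ZMod 2 :=
  ∑ a : Fin n, ∑ b : Fin n, if a < b then M a b * bit2 (x a) * bit2 (x b) else 0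

def Tf {n : ℕ} (f : Fin n → ZMod 2) (x : Fin n → Fin 2) : ZMod 2 :=
  ∑ a : Fin n, ∑ b : Fin n, if a < b then f a * f b * bit2 (x a) * bit2 (x b) else 0

def adjB {n : ℕ} (G : SimpleGraph (Fin n)) (a b : Fin n) : ZMod 2 :=
  if G.Adj a b then 1 else 0

lemma adjB_symm {n : ℕ} (G : SimpleGraph (Fin n)) (a b : Fin n) : adjB G a b = adjB G b a := by
  unfold adjB; by_cases h : G.Adj a b
  · rw [if_pos h, if_pos h.symm]
  · rw [if_neg h, if_neg fun h' => h h'.symm]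

lemma adjB_diag {n : ℕ} (G : SimpleGraph (Fin n)) (a : Fin n) : adjB G a a = 0 := by
  unfold adjB; rw [if_neg (G.loopless.irrefl a)]

lemma adjB_localComp {n : ℕ} (G : SimpleGraph (Fin n)) (w a b : Fin n) :
    adjB (localComp G w) a b = adjB G a b + (if a = b then 0 else adjB G w a * adjB G w b) := by
  unfold adjB localComp
  by_cases hab : a = b
  · subst hab
    simp [G.loopless.irrefl a]
  · rw [if_neg hab]
    simp only [SimpleGraph.Adj]
    by_cases hc : G.Adj w a ∧ G.Adj w b
    · obtain ⟨h1, h2⟩ := hc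
      by_cases h : G.Adj a b
      · rw [if_neg (by simp [h1, h2, h]), if_pos h, if_pos h1, if_pos h2]; decide
      · rw [if_pos ⟨hab, by simp [h1, h2, h]⟩, if_neg h, if_pos h1, if_pos h2]; decide
    · have hz : (if G.Adj w a then (1:ZMod 2) else 0) * (if G.Adj w b then (1:ZMod 2) else 0) = 0 := by
        by_cases h1 : G.Adj w a
        · have h2 : ¬ G.Adj w b := fun h2 => hc ⟨h1, h2⟩
          rw [if_neg h2, mul_zero]
        · rw [if_neg h1, zero_mul]
      by_cases h : G.Adj a b
      · rw [if_pos ⟨hab, by simp [hc, h]⟩, if_pos h, hz, add_zero]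
      · rw [if_neg (by simp [hc, h]), if_neg h, hz, add_zero]

lemma sum_single_mul {n : ℕ} (w : Fin n) (g : Fin n → ZMod 2) :
    (∑ a : Fin n, (if a = w then 1 else 0) * g a) = g w := by
  rw [Finset.sum_congr rfl (fun a _ => by
    rw [show ((if a = w then (1:ZMod 2) else 0) * g a) = if a = w then g a else 0 by
      by_cases h : a = w <;> simp [h]])]
  rw [Finset.sum_ite_eq' Finset.univ w g]; simp

lemma sum_update {n : ℕ} (g : Fin n → ZMod 2) (x : Fin n → Fin 2) (w : Fin n) (c : Fin 2) :
    (∑ b : Fin n, g b * bit2 (Function.update x w c b))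
      = (∑ b : Fin n, g b * bit2 (x b)) + g w * (bit2 c + bit2 (x w)) := by
  classical
  have key : ∀ b, g b * bit2 (Function.update x w c b)
      = g b * bit2 (x b) + (if b = w then 1 else 0) * (g w * (bit2 c + bit2 (x w))) := by
    intro b
    by_cases hbw : b = w
    · subst hbw
      rw [Function.update_self, if_pos rfl, one_mul]
      have : ∀ p q r : ZMod 2, r * q = r * p + r * (q + p) := by decide
      exact this (bit2 (x b)) (bit2 c) (g b)
    · rw [Function.update_of_ne hbw, if_neg hbw, zero_mul, add_zero]
  rw [Finset.sum_congr rfl fun b _ => key b, Finset.sum_add_distrib,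
    sum_single_mul w (fun _ => g w * (bit2 c + bit2 (x w)))]

lemma QF_update {n : ℕ} (M : Fin n → Fin n → ZMod 2)
    (hsymm : ∀ a b, M a b = M b a) (hdiag : ∀ a, M a a = 0)
    (x : Fin n → Fin 2) (w : Fin n) (c : Fin 2) :
    QF M (Function.update x w c) =
      QF M x + (bit2 c + bit2 (x w)) * ∑ b : Fin n, M w b * bit2 (x b) := by
  classical
  set k : ZMod 2 := bit2 c + bit2 (x w) with hk
  set d : Fin n → ZMod 2 := fun a => if a = w then k else 0 with hd
  have hY : ∀ a, bit2 (Function.update x w c a) = bit2 (x a) + d a := by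
    intro a
    by_cases haw : a = w
    · subst haw
      rw [Function.update_self]
      simp only [hd, if_pos rfl, hk]
      exact (by decide : ∀ p q : ZMod 2, q = p + (q + p)) (bit2 (x a)) (bit2 c)
    · rw [Function.update_of_ne haw]
      simp [hd, haw]
  have hdd : ∀ a b : Fin n, a < b → M a b * d a * d b = 0 := by
    intro a b hab
    by_cases haw : a = w
    · have hbw : b ≠ w := fun h => hab.ne (haw.trans h.symm)
      simp [hd, hbw]
    · simp [hd, haw]
  set h : Fin n → Fin n → ZMod 2 := fun a b => M a b * d a * bit2 (x b) with hh
  have hterm : ∀ a b : Fin n, a < b →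
      M a b * bit2 (Function.update x w c a) * bit2 (Function.update x w c b)
      = M a b * bit2 (x a) * bit2 (x b) + (h a b + h b a) := by
    intro a b hab
    rw [hY a, hY b]
    have := hdd a b hab
    simp only [hh]
    rw [hsymm b a]
    have expand : M a b * (bit2 (x a) + d a) * (bit2 (x b) + d b)
        = M a b * bit2 (x a) * bit2 (x b) + (M a b * d a * bit2 (x b) + M a b * d b * bit2 (x a))
          + M a b * d a * d b := by ring
    rw [expand, this, add_zero]
  have split : QF M (Function.update x w c)
      = QF M x + ∑ a : Fin n, ∑ b : Fin n, (if a < b then h a b + h b a else 0) := by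
    unfold QF
    rw [← Finset.sum_add_distrib]
    refine Finset.sum_congr rfl fun a _ => ?_
    rw [← Finset.sum_add_distrib]
    refine Finset.sum_congr rfl fun b _ => ?_
    by_cases hab : a < b
    · simp only [hab, if_true]
      exact hterm a b hab
    · simp [hab]
  have hdiag' : ∀ a : Fin n, h a a = 0 := by
    intro a; simp only [hh]; rw [hdiag a]; ring
  have full : (∑ a : Fin n, ∑ b : Fin n, h a b) = k * ∑ b : Fin n, M w b * bit2 (x b) := by
    have e1 : ∀ a : Fin n, (∑ b : Fin n, h a b)
        = (if a = w then 1 else 0) * (k * ∑ b : Fin n, M a b * bit2 (x b)) := by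
      intro a
      simp only [hh]
      by_cases haw : a = w
      · subst haw
        rw [if_pos rfl, one_mul, Finset.mul_sum]
        refine Finset.sum_congr rfl fun b _ => ?_
        simp only [hd, if_pos rfl]
        ring
      · rw [if_neg haw, zero_mul]
        refine Finset.sum_eq_zero fun b _ => ?_
        simp [hd, haw]
    rw [Finset.sum_congr rfl fun a _ => e1 a,
      sum_single_mul w (fun a => k * ∑ b : Fin n, M a b * bit2 (x b))]
  have hsp := sum_pairs h
  rw [Finset.sum_congr rfl fun a _ => hdiag' a] at hsp
  rw [Finset.sum_const_zero, add_zero] at hsp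
  rw [split, hsp, full]

lemma QF_add3 {n : ℕ} (M : Fin n → Fin n → ZMod 2) (f g k : Fin n → ZMod 2)
    (x : Fin n → Fin 2) :
    QF (fun a b => M a b + (if a = b then 0 else f a * f b) + (if a = b then 0 else g a * g b)
        + (if a = b then 0 else k a * k b)) x
      = QF M x + Tf f x + Tf g x + Tf k x := by
  unfold QF Tf
  rw [← Finset.sum_add_distrib, ← Finset.sum_add_distrib, ← Finset.sum_add_distrib]
  refine Finset.sum_congr rfl fun a _ => ?_
  rw [← Finset.sum_add_distrib, ← Finset.sum_add_distrib, ← Finset.sum_add_distrib]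
  refine Finset.sum_congr rfl fun b _ => ?_
  by_cases hab : a < b
  · simp only [hab, if_true, if_neg hab.ne]
    ring
  · simp [hab]

lemma Tf_add {n : ℕ} (f g : Fin n → ZMod 2) (x : Fin n → Fin 2) :
    Tf (fun a => f a + g a) x = Tf f x + Tf g x +
      ((∑ a : Fin n, f a * bit2 (x a)) * (∑ a : Fin n, g a * bit2 (x a)) +
        ∑ a : Fin n, f a * g a * bit2 (x a)) := by
  have e : ∀ a b : Fin n,
      (f a + g a) * (f b + g b) * bit2 (x a) * bit2 (x b) =
        f a * f b * bit2 (x a) * bit2 (x b) + g a * g b * bit2 (x a) * bit2 (x b) +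
          (f a * g b + f b * g a) * bit2 (x a) * bit2 (x b) := by intro a b; ring
  unfold Tf
  rw [← cross_sum f g x, ← Finset.sum_add_distrib, ← Finset.sum_add_distrib]
  refine Finset.sum_congr rfl fun a _ => ?_
  rw [← Finset.sum_add_distrib, ← Finset.sum_add_distrib]
  refine Finset.sum_congr rfl fun b _ => ?_
  by_cases hab : a < b <;> simp only [hab, if_true, if_false]
  · exact e a b
  · simp

lemma Tf_single {n : ℕ} (w : Fin n) (x : Fin n → Fin 2) :
    Tf (fun a => if a = w then 1 else 0) x = 0 := by
  unfold Tf
  refine Finset.sum_eq_zero fun a _ => Finset.sum_eq_zero fun b _ => ?_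
  by_cases hab : a < b
  · by_cases haw : a = w
    · have hbw : b ≠ w := fun h => hab.ne (haw.trans h.symm)
      simp [hab, hbw]
    · simp [hab, haw]
  · simp [hab]

lemma graphState_eq {n : ℕ} (G : SimpleGraph (Fin n)) (x : Fin n → Fin 2) :
    graphState G x = ((Real.sqrt 2 : ℂ))⁻¹ ^ n * sg (QF (adjB G) x) := by
  unfold graphState QF
  congr 1
  rw [sg_sum]
  refine (Finset.prod_congr rfl fun a _ => ?_).symm
  rw [sg_sum]
  refine (Finset.prod_congr rfl fun b _ => ?_).symm
  by_cases hab : a < b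
  · rw [if_pos hab]
    by_cases hadj : G.Adj a b
    · rw [show adjB G a b = 1 from if_pos hadj, one_mul, sg_bit2_mul]
      by_cases h1 : x a = 1 ∧ x b = 1
      · rw [if_pos h1, if_pos ⟨hab, hadj, h1.1, h1.2⟩]
      · rw [if_neg h1, if_neg (by tauto)]
    · rw [show adjB G a b = 0 from if_neg hadj, zero_mul, zero_mul,
        if_neg (by tauto), show sg 0 = 1 from by norm_num [sg]]
  · rw [if_neg hab, if_neg (by tauto), show sg 0 = 1 from by norm_num [sg]]

lemma pauliZs_mulVec {n : ℕ} (S : Finset (Fin n)) (f : (Fin n → Fin 2) → ℂ) (x : Fin n → Fin 2) :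
    ((pauliZs S).mulVec f) x = sg (∑ w ∈ S, bit2 (x w)) * f x := by
  unfold pauliZs
  rw [Matrix.mulVec_diagonal]
  congr 1
  rw [sg_sum]
  exact Finset.prod_congr rfl fun w _ => (sg_bit2 (x w)).symm

lemma act1_mulVec {n : ℕ} (A : Matrix (Fin 2) (Fin 2) ℂ) (w : Fin n)
    (f : (Fin n → Fin 2) → ℂ) (x : Fin n → Fin 2) :
    ((act1 A w).mulVec f) x = ∑ a : Fin 2, A (x w) a * f (Function.update x w a) := by
  classical
  unfold act1 Matrix.mulVec dotProduct
  have hP : ∀ y : Fin n → Fin 2,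
      (∏ t : Fin n, if t = w then (1:ℂ) else (if x t = y t then 1 else 0))
        = if y = Function.update x w (y w) then 1 else 0 := by
    intro y
    by_cases h : y = Function.update x w (y w)
    · rw [if_pos h]
      refine Finset.prod_eq_one fun t _ => ?_
      by_cases htw : t = w
      · rw [if_pos htw]
      · rw [if_neg htw, if_pos]
        conv_rhs => rw [h]
        rw [Function.update_of_ne htw]
    · rw [if_neg h]
      have : ∃ t, t ≠ w ∧ x t ≠ y t := by
        by_contra hc
        push_neg at hc
        exact h (funext fun t => by
          by_cases htw : t = w
          · subst htw; rw [Function.update_self]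
          · rw [Function.update_of_ne htw]; exact (hc t htw).symm)
      obtain ⟨t, htw, hxy⟩ := this
      refine Finset.prod_eq_zero (Finset.mem_univ t) ?_
      rw [if_neg htw, if_neg hxy]
  have key : ∀ y : Fin n → Fin 2,
      A (x w) (y w) * (∏ t : Fin n, if t = w then (1:ℂ) else (if x t = y t then 1 else 0)) * f y
        = if y = Function.update x w (y w) then A (x w) (y w) * f y else 0 := by
    intro y
    rw [hP y]
    by_cases h : y = Function.update x w (y w)
    · rw [if_pos h, if_pos h]; ring
    · rw [if_neg h, if_neg h]; ring
  rw [Finset.sum_congr rfl fun y _ => key y]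
  have himg : ∀ y : Fin n → Fin 2, y ∉ Finset.univ.image (fun a : Fin 2 => Function.update x w a) →
      (if y = Function.update x w (y w) then A (x w) (y w) * f y else 0) = 0 := by
    intro y hy
    rw [if_neg]
    intro h
    exact hy (Finset.mem_image.mpr ⟨y w, Finset.mem_univ _, h.symm⟩)
  rw [← Finset.sum_subset (Finset.subset_univ _) (fun y _ hy => himg y hy)]
  rw [Finset.sum_image (by
    intro a _ b _ h
    have := congrFun h w
    simpa using this)]
  refine Finset.sum_congr rfl fun a _ => ?_
  rw [if_pos (by rw [Function.update_self])]
  rw [Function.update_self]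

lemma Hm_apply (i j : Fin 2) : Hm i j = (Real.sqrt 2 : ℂ)⁻¹ * sg (bit2 i * bit2 j) := by
  fin_cases i <;> fin_cases j <;> norm_num [Hm, sg, bit2]

lemma key4 (c p q : ZMod 2) :
    sg c + sg (c + p) + sg (c + q) + sg (c + p + q + 1) = 2 * sg (c + p * q) := by
  have h : ∀ z : ZMod 2, z = 0 ∨ z = 1 := by decide
  rcases h c with hc | hc <;> rcases h p with hp | hp <;> rcases h q with hq | hq <;>
    subst hc <;> subst hp <;> subst hq <;>
    norm_num [sg, show (2:ZMod 2) ≠ 1 from by decide, show (3:ZMod 2) = 1 from by decide,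
      show (4:ZMod 2) ≠ 1 from by decide] <;>
    rw [if_pos (show (3:ZMod 2) = 1 from by decide)] <;> norm_num

set_option maxHeartbeats 2000000 in
lemma QF_pivot {n : ℕ} (G : SimpleGraph (Fin n)) (u v : Fin n) (huv : G.Adj u v)
    (x : Fin n → Fin 2) :
    QF (adjB (localComp (localComp (localComp G u) v) u)) x
      = QF (adjB G) x + (∑ a : Fin n, adjB G u a * adjB G v a * bit2 (x a))
        + bit2 (x u) * (∑ a : Fin n, adjB G u a * bit2 (x a))
        + bit2 (x v) * (∑ a : Fin n, adjB G v a * bit2 (x a))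
        + bit2 (x u) * bit2 (x v)
        + (bit2 (x u) + bit2 (x v) + ∑ a : Fin n, adjB G u a * bit2 (x a)) *
            (bit2 (x u) + bit2 (x v) + ∑ a : Fin n, adjB G v a * bit2 (x a)) := by
  classical
  have huvne : u ≠ v := G.ne_of_adj huv
  have hsv : adjB G u v = 1 := if_pos huv
  have htu : adjB G v u = 1 := if_pos huv.symm
  have hsu : adjB G u u = 0 := adjB_diag G u
  have htv : adjB G v v = 0 := adjB_diag G v
  -- the three toggle vectors
  have hG1v : ∀ a, adjB (localComp G u) v a
      = adjB G u a + adjB G v a + (if a = v then 1 else 0) := by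
    intro a
    rw [adjB_localComp G u v a]
    by_cases hav : a = v
    · subst hav
      rw [if_pos rfl, if_pos rfl, htv, hsv]
      decide
    · rw [if_neg (fun h => hav h.symm), if_neg hav, hsv, one_mul, add_zero]
      exact add_comm _ _
  have hG2u : ∀ a, adjB (localComp (localComp G u) v) u a
      = adjB G v a + ((if a = u then 1 else 0) + (if a = v then 1 else 0)) := by
    intro a
    rw [adjB_localComp (localComp G u) v u a, adjB_localComp G u u a, hG1v u, hG1v a]
    by_cases hau : a = u
    · subst hau
      rw [if_pos rfl, if_pos rfl, if_pos rfl, if_neg huvne, hsu, htu]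
      decide
    · have hua : u ≠ a := fun h => hau h.symm
      rw [if_neg hua, if_neg hua, if_neg hau, hsu, htu, if_neg huvne, zero_mul, add_zero]
      by_cases hav : a = v
      · subst hav
        simp only [eq_self_iff_true, if_true]
        exact (by decide : ∀ p q : ZMod 2, p + (0 + 1 + 0) * (p + q + 1) = q + (0 + 1)) _ _
      · simp only [if_neg hav]
        exact (by decide : ∀ p q : ZMod 2, p + (0 + 1 + 0) * (p + q + 0) = q + (0 + 0)) _ _
  have hfull : adjB (localComp (localComp (localComp G u) v) u)
      = fun a b => adjB G a b
          + (if a = b then 0 else adjB G u a * adjB G u b)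
          + (if a = b then 0 else
              (adjB G u a + adjB G v a + (if a = v then 1 else 0)) *
              (adjB G u b + adjB G v b + (if b = v then 1 else 0)))
          + (if a = b then 0 else
              (adjB G v a + ((if a = u then 1 else 0) + (if a = v then 1 else 0))) *
              (adjB G v b + ((if b = u then 1 else 0) + (if b = v then 1 else 0)))) := by
    funext a b
    rw [adjB_localComp (localComp (localComp G u) v) u a b, hG2u a, hG2u b,
      adjB_localComp (localComp G u) v a b, hG1v a, hG1v b,
      adjB_localComp G u a b]
  have h3 : QF (fun a b => adjB G a b
          + (if a = b then 0 else adjB G u a * adjB G u b)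
          + (if a = b then 0 else
              (adjB G u a + adjB G v a + (if a = v then 1 else 0)) *
              (adjB G u b + adjB G v b + (if b = v then 1 else 0)))
          + (if a = b then 0 else
              (adjB G v a + ((if a = u then 1 else 0) + (if a = v then 1 else 0))) *
              (adjB G v b + ((if b = u then 1 else 0) + (if b = v then 1 else 0))))) x
      = QF (adjB G) x + Tf (fun a => adjB G u a) x
        + Tf (fun a => adjB G u a + adjB G v a + (if a = v then 1 else 0)) x
        + Tf (fun a => adjB G v a + ((if a = u then 1 else 0) + (if a = v then 1 else 0))) x :=
    QF_add3 (adjB G) (fun a => adjB G u a)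
      (fun a => adjB G u a + adjB G v a + (if a = v then 1 else 0))
      (fun a => adjB G v a + ((if a = u then 1 else 0) + (if a = v then 1 else 0))) x
  rw [hfull, h3]
  have e2 : Tf (fun a => adjB G u a + adjB G v a) x
      = Tf (fun a => adjB G u a) x + Tf (fun a => adjB G v a) x +
        ((∑ a : Fin n, adjB G u a * bit2 (x a)) * (∑ a : Fin n, adjB G v a * bit2 (x a)) +
          ∑ a : Fin n, adjB G u a * adjB G v a * bit2 (x a)) := Tf_add _ _ x
  have e1 : Tf (fun a => adjB G u a + adjB G v a + (if a = v then 1 else 0)) x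
      = Tf (fun a => adjB G u a + adjB G v a) x + Tf (fun a => if a = v then 1 else 0) x +
        ((∑ a : Fin n, (adjB G u a + adjB G v a) * bit2 (x a)) *
            (∑ a : Fin n, (if a = v then 1 else 0) * bit2 (x a)) +
          ∑ a : Fin n, (adjB G u a + adjB G v a) * (if a = v then 1 else 0) * bit2 (x a)) :=
    Tf_add _ _ x
  have f1 : Tf (fun a => adjB G v a + ((if a = u then 1 else 0) + (if a = v then 1 else 0))) x
      = Tf (fun a => adjB G v a) x
        + Tf (fun a => (if a = u then 1 else 0) + (if a = v then 1 else 0)) x +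
        ((∑ a : Fin n, adjB G v a * bit2 (x a)) *
            (∑ a : Fin n, ((if a = u then 1 else 0) + (if a = v then 1 else 0)) * bit2 (x a)) +
          ∑ a : Fin n, adjB G v a * ((if a = u then 1 else 0) + (if a = v then 1 else 0)) *
            bit2 (x a)) := Tf_add _ _ x
  have f2 : Tf (fun a => (if a = u then 1 else 0) + (if a = v then 1 else 0)) x
      = Tf (fun a => if a = u then 1 else 0) x + Tf (fun a => if a = v then 1 else 0) x +
        ((∑ a : Fin n, (if a = u then 1 else 0) * bit2 (x a)) *
            (∑ a : Fin n, (if a = v then 1 else 0) * bit2 (x a)) +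
          ∑ a : Fin n, (if a = u then 1 else 0) * (if a = v then 1 else 0) * bit2 (x a)) :=
    Tf_add _ _ x
  have hA : (∑ a : Fin n, (adjB G u a + adjB G v a) * bit2 (x a))
      = (∑ a : Fin n, adjB G u a * bit2 (x a)) + ∑ a : Fin n, adjB G v a * bit2 (x a) := by
    rw [Finset.sum_congr rfl (fun a _ => add_mul (adjB G u a) (adjB G v a) (bit2 (x a))),
      Finset.sum_add_distrib]
  have hB : (∑ a : Fin n, (if a = v then 1 else 0) * bit2 (x a)) = bit2 (x v) :=
    sum_single_mul v _
  have hDu : (∑ a : Fin n, (if a = u then 1 else 0) * bit2 (x a)) = bit2 (x u) :=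
    sum_single_mul u _
  have hCst : (∑ a : Fin n, (adjB G u a + adjB G v a) * (if a = v then 1 else 0) * bit2 (x a))
      = bit2 (x v) := by
    rw [Finset.sum_congr rfl (fun a _ =>
      show (adjB G u a + adjB G v a) * (if a = v then 1 else 0) * bit2 (x a)
          = if a = v then (adjB G u a + adjB G v a) * bit2 (x a) else 0 from by
        by_cases h : a = v <;> simp [h])]
    rw [Finset.sum_ite_eq' Finset.univ v (fun a => (adjB G u a + adjB G v a) * bit2 (x a))]
    simp [hsv, htv]
  have hdudv : (∑ a : Fin n, (if a = u then 1 else 0) * (if a = v then 1 else 0) * bit2 (x a))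
      = 0 := by
    refine Finset.sum_eq_zero fun a _ => ?_
    by_cases h1 : a = u
    · subst h1
      rw [if_neg (fun h => huvne h), mul_zero, zero_mul]
    · rw [if_neg h1, zero_mul, zero_mul]
  have hLdudv : (∑ a : Fin n, ((if a = u then 1 else 0) + (if a = v then 1 else 0)) * bit2 (x a))
      = bit2 (x u) + bit2 (x v) := by
    rw [Finset.sum_congr rfl (fun a _ =>
      add_mul (if a = u then (1:ZMod 2) else 0) (if a = v then 1 else 0) (bit2 (x a))),
      Finset.sum_add_distrib, hDu, hB]
  have hM2 : (∑ a : Fin n, adjB G v a * ((if a = u then 1 else 0) + (if a = v then 1 else 0)) *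
      bit2 (x a)) = bit2 (x u) := by
    rw [Finset.sum_congr rfl (fun a _ =>
      show adjB G v a * ((if a = u then 1 else 0) + (if a = v then 1 else 0)) * bit2 (x a)
          = (if a = u then adjB G v a * bit2 (x a) else 0)
            + (if a = v then adjB G v a * bit2 (x a) else 0) from by
        by_cases h1 : a = u
        · subst h1
          rw [if_pos rfl, if_pos rfl, if_neg (fun h => huvne h), if_neg (fun h => huvne h)]
          ring
        · by_cases h2 : a = v <;> simp [h1, h2, Ne.symm huvne] <;> ring)]
    rw [Finset.sum_add_distrib,
      Finset.sum_ite_eq' Finset.univ u (fun a => adjB G v a * bit2 (x a)),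
      Finset.sum_ite_eq' Finset.univ v (fun a => adjB G v a * bit2 (x a))]
    simp [htu, htv]
  rw [e1, e2, f1, f2, Tf_single u x, Tf_single v x, hA, hB, hDu, hCst, hdudv, hLdudv, hM2]
  exact (by decide : ∀ Q A1 A2 S T C p r : ZMod 2,
    Q + A1 + (A1 + A2 + (S * T + C) + 0 + ((S + T) * r + r)) +
        (A2 + (0 + 0 + (p * r + 0)) + (T * (p + r) + p))
      = Q + C + p * S + r * T + p * r + (p + r + S) * (p + r + T)) _ _ _ _ _ _ _ _

/-- The pivoting property of graph states:
`|G ∧ uv⟩ = H_u H_v Z_{N(u)∩N(v)} |G⟩` up to a global phase. -/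
theorem pivoting_property {n : ℕ} (G : SimpleGraph (Fin n)) (u v : Fin n) (huv : G.Adj u v) :
    ∃ θ : ℝ, graphState (localComp (localComp (localComp G u) v) u) =
      Complex.exp (θ * Complex.I) •
        (act1 Hm u * act1 Hm v *
          pauliZs (G.neighborFinset u ∩ G.neighborFinset v)).mulVec (graphState G) := by
  classical
  have huvne : u ≠ v := G.ne_of_adj huv
  have hsymm : ∀ a b, adjB G a b = adjB G b a := adjB_symm G
  have hdiag : ∀ a, adjB G a a = 0 := adjB_diag G
  have htu : adjB G v u = 1 := if_pos huv.symm
  refine ⟨0, ?_⟩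
  have hexp : Complex.exp ((0:ℝ) * Complex.I) = 1 := by norm_num
  rw [hexp, one_smul]
  funext x
  -- the Z-string exponent
  have hzC : ∀ a b : Fin 2,
      (∑ w ∈ G.neighborFinset u ∩ G.neighborFinset v,
          bit2 (Function.update (Function.update x u a) v b w))
        = ∑ c : Fin n, adjB G u c * adjB G v c * bit2 (x c) := by
    intro a b
    have h1 : ∀ w ∈ G.neighborFinset u ∩ G.neighborFinset v,
        bit2 (Function.update (Function.update x u a) v b w)
          = adjB G u w * adjB G v w * bit2 (x w) := by
      intro w hw
      rw [Finset.mem_inter, SimpleGraph.mem_neighborFinset, SimpleGraph.mem_neighborFinset] at hw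
      rw [Function.update_of_ne hw.2.ne', Function.update_of_ne hw.1.ne',
        show adjB G u w = 1 from if_pos hw.1, show adjB G v w = 1 from if_pos hw.2,
        one_mul, one_mul]
    rw [Finset.sum_congr rfl h1]
    refine Finset.sum_subset (Finset.subset_univ _) ?_
    intro w _ hnw
    rw [Finset.mem_inter, SimpleGraph.mem_neighborFinset, SimpleGraph.mem_neighborFinset] at hnw
    by_cases h2 : G.Adj u w
    · have h3 : ¬ G.Adj v w := fun h3 => hnw ⟨h2, h3⟩
      rw [show adjB G v w = 0 from if_neg h3, mul_zero, zero_mul]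
    · rw [show adjB G u w = 0 from if_neg h2, zero_mul, zero_mul]
  -- the quadratic form at the updated point
  have hQy : ∀ a b : Fin 2,
      QF (adjB G) (Function.update (Function.update x u a) v b)
        = QF (adjB G) x
          + (bit2 a + bit2 (x u)) * (∑ c : Fin n, adjB G u c * bit2 (x c))
          + (bit2 b + bit2 (x v)) *
              ((∑ c : Fin n, adjB G v c * bit2 (x c)) + (bit2 a + bit2 (x u))) := by
    intro a b
    rw [QF_update (adjB G) hsymm hdiag (Function.update x u a) v b,
      QF_update (adjB G) hsymm hdiag x u a,
      show Function.update x u a v = x v from Function.update_of_ne (Ne.symm huvne) a x,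
      sum_update (fun c => adjB G v c) x u a, htu, one_mul]
  have hmerge : ∀ c1 c2 c3 c4 : ZMod 2,
      ((Real.sqrt 2 : ℂ)⁻¹ * sg c1) * (((Real.sqrt 2 : ℂ)⁻¹ * sg c2) *
        (sg c3 * ((Real.sqrt 2 : ℂ)⁻¹ ^ n * sg c4)))
        = (Real.sqrt 2 : ℂ)⁻¹ ^ (n + 2) * sg (c1 + c2 + (c3 + c4)) := by
    intro c1 c2 c3 c4
    rw [sg_add, sg_add, sg_add]
    ring
  rw [graphState_eq, QF_pivot G u v huv x]
  rw [← Matrix.mulVec_mulVec, ← Matrix.mulVec_mulVec, act1_mulVec]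
  refine Eq.symm ?_
  have step1 : (∑ a : Fin 2, Hm (x u) a *
      ((act1 Hm v *ᵥ (pauliZs (G.neighborFinset u ∩ G.neighborFinset v) *ᵥ graphState G))
        (Function.update x u a)))
      = ∑ a : Fin 2, ∑ b : Fin 2, (Real.sqrt 2 : ℂ)⁻¹ ^ (n + 2) *
          sg ((QF (adjB G) x + (∑ c : Fin n, adjB G u c * adjB G v c * bit2 (x c))
            + bit2 (x u) * (∑ c : Fin n, adjB G u c * bit2 (x c))
            + bit2 (x v) * (∑ c : Fin n, adjB G v c * bit2 (x c))
            + bit2 (x u) * bit2 (x v))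
            + bit2 a * (bit2 (x u) + bit2 (x v) + ∑ c : Fin n, adjB G u c * bit2 (x c))
            + bit2 b * (bit2 (x u) + bit2 (x v) + ∑ c : Fin n, adjB G v c * bit2 (x c))
            + bit2 a * bit2 b) := by
    refine Finset.sum_congr rfl fun a _ => ?_
    rw [act1_mulVec Hm v (pauliZs (G.neighborFinset u ∩ G.neighborFinset v) *ᵥ graphState G)
      (Function.update x u a)]
    rw [show Function.update x u a v = x v from Function.update_of_ne (Ne.symm huvne) a x]
    rw [Finset.mul_sum]
    refine Finset.sum_congr rfl fun b _ => ?_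
    rw [pauliZs_mulVec, hzC a b, graphState_eq G, hQy a b, Hm_apply (x u) a, Hm_apply (x v) b]
    rw [hmerge]
    congr 1
    ring
  rw [step1]
  set E0 : ZMod 2 := QF (adjB G) x + (∑ c : Fin n, adjB G u c * adjB G v c * bit2 (x c))
    + bit2 (x u) * (∑ c : Fin n, adjB G u c * bit2 (x c))
    + bit2 (x v) * (∑ c : Fin n, adjB G v c * bit2 (x c))
    + bit2 (x u) * bit2 (x v) with hE0
  set P : ZMod 2 := bit2 (x u) + bit2 (x v) + ∑ c : Fin n, adjB G u c * bit2 (x c) with hP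
  set Qq : ZMod 2 := bit2 (x u) + bit2 (x v) + ∑ c : Fin n, adjB G v c * bit2 (x c) with hQq
  simp only [← Finset.mul_sum]
  rw [Fin.sum_univ_two, Fin.sum_univ_two, Fin.sum_univ_two,
    show bit2 0 = 0 from by decide, show bit2 1 = 1 from by decide]
  simp only [zero_mul, one_mul, mul_zero, mul_one, add_zero]
  have hkey := key4 E0 P Qq
  have h2 : ((Real.sqrt 2 : ℂ))⁻¹ ^ (n + 2) * 2 = ((Real.sqrt 2 : ℂ))⁻¹ ^ n := by
    have hsq : ((Real.sqrt 2 : ℝ) : ℂ) ^ 2 = 2 := by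
      rw [← Complex.ofReal_pow, Real.sq_sqrt (by norm_num : (0:ℝ) ≤ 2)]
      norm_num
    rw [pow_add, inv_pow, inv_pow, hsq, mul_assoc, inv_mul_cancel₀ (two_ne_zero), mul_one]
  linear_combination ((Real.sqrt 2 : ℂ))⁻¹ ^ (n + 2) * hkey + sg (E0 + P * Qq) * h2
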